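/- The Lie algebra so(6) decomposes as a direct sum of vector spaces so(6) = su(3) ⊕ [ℝ]₁ ⊕ [ℝ^6]₂, where [a]₁ is the matrix with entries a·κ_{ij} and [v]₂ is the matrix with entries ε_{ijp} v_p; in particular every skew-symmetric 6×6 real matrix decomposes uniquely into these three summands. -/
import Mathlib


open Matrix

noncomputable section

/-- The coefficient array `κ_{ij}` of `κ₀ = e^{12}+e^{34}+e^{56}` (0-based indices). -/
def kap : Fin 6 → Fin 6 → ℝ := fun i j =>
  if (i = 0 ∧ j = 1) ∨ (i = 2 ∧ j = 3) ∨ (i = 4 ∧ j = 5) then 1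
  else if (i = 1 ∧ j = 0) ∨ (i = 3 ∧ j = 2) ∨ (i = 5 ∧ j = 4) then -1 else 0

/-- Values of `ε` on the strictly increasing triples (0-based):
`Ω₀ = e^{135}-e^{146}-e^{245}-e^{236}`. -/
def epsBase : Fin 6 → Fin 6 → Fin 6 → ℝ := fun i j k =>
  if i = 0 ∧ j = 2 ∧ k = 4 then 1
  else if i = 0 ∧ j = 3 ∧ k = 5 then -1
  else if i = 1 ∧ j = 3 ∧ k = 4 then -1
  else if i = 1 ∧ j = 2 ∧ k = 5 then -1 else 0

/-- Values of `ε̄` on the strictly increasing triples (0-based):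
`J₀Ω₀ = -e^{246}+e^{235}+e^{145}+e^{136}`. -/
def epsbarBase : Fin 6 → Fin 6 → Fin 6 → ℝ := fun i j k =>
  if i = 1 ∧ j = 3 ∧ k = 5 then -1
  else if i = 1 ∧ j = 2 ∧ k = 4 then 1
  else if i = 0 ∧ j = 3 ∧ k = 4 then 1
  else if i = 0 ∧ j = 2 ∧ k = 5 then 1 else 0

/-- Totally antisymmetric extension of a coefficient array supported on
strictly increasing triples. -/
def antisym3 (b : Fin 6 → Fin 6 → Fin 6 → ℝ) : Fin 6 → Fin 6 → Fin 6 → ℝ := fun i j k =>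
  ∑ σ : Equiv.Perm (Fin 3),
    ((Equiv.Perm.sign σ : ℤ) : ℝ) * b (![i, j, k] (σ 0)) (![i, j, k] (σ 1)) (![i, j, k] (σ 2))

/-- The totally antisymmetric array `ε_{ijk}` with `Ω₀ = (1/6) ε_{ijk} e^{ijk}`. -/
def eps : Fin 6 → Fin 6 → Fin 6 → ℝ := antisym3 epsBase

/-- The totally antisymmetric array `ε̄_{ijk}` with `J₀Ω₀ = (1/6) ε̄_{ijk} e^{ijk}`. -/
def epsbar : Fin 6 → Fin 6 → Fin 6 → ℝ := antisym3 epsbarBase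

/-- Kronecker delta `δ_{ij}`. -/
def kron (i j : Fin 6) : ℝ := if i = j then 1 else 0

/-- The summand `[ℝ]₁ ⊂ so(6)`: `[a]₁` has entries `a κ_{ij}`. -/
def bracket1 (a : ℝ) : Matrix (Fin 6) (Fin 6) ℝ := fun i j => a * kap i j

/-- The summand `[ℝ⁶]₂ ⊂ so(6)`: `[v]₂` has entries `ε_{ijp} v_p`. -/
def bracket2 (v : Fin 6 → ℝ) : Matrix (Fin 6) (Fin 6) ℝ := fun i j => ∑ p, eps i j p * v p

/-- Membership in the image of `su(3)` inside `so(6)` (characterized by the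
vanishing of the `ε`- and `κ`-contractions). -/
def memSU3 (θ : Matrix (Fin 6) (Fin 6) ℝ) : Prop :=
  θᵀ = -θ ∧ (∀ i, ∑ j, ∑ k, eps i j k * θ j k = 0) ∧ (∑ j, ∑ k, kap j k * θ j k = 0)

/-! ### Auxiliary integer versions and computed identities -/

def kapZ : Fin 6 → Fin 6 → ℤ := fun i j =>
  if (i = 0 ∧ j = 1) ∨ (i = 2 ∧ j = 3) ∨ (i = 4 ∧ j = 5) then 1
  else if (i = 1 ∧ j = 0) ∨ (i = 3 ∧ j = 2) ∨ (i = 5 ∧ j = 4) then -1 else 0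

def epsBaseZ : Fin 6 → Fin 6 → Fin 6 → ℤ := fun i j k =>
  if i = 0 ∧ j = 2 ∧ k = 4 then 1
  else if i = 0 ∧ j = 3 ∧ k = 5 then -1
  else if i = 1 ∧ j = 3 ∧ k = 4 then -1
  else if i = 1 ∧ j = 2 ∧ k = 5 then -1 else 0

def epsZ : Fin 6 → Fin 6 → Fin 6 → ℤ := fun i j k =>
  ∑ σ : Equiv.Perm (Fin 3),
    (Equiv.Perm.sign σ : ℤ) * epsBaseZ (![i, j, k] (σ 0)) (![i, j, k] (σ 1)) (![i, j, k] (σ 2))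

def epsT : Fin 6 → Fin 6 → Fin 6 → ℤ := fun i j k =>
  ![![![0, 0, 0, 0, 0, 0],
   ![0, 0, 0, 0, 0, 0],
   ![0, 0, 0, 0, 1, 0],
   ![0, 0, 0, 0, 0, -1],
   ![0, 0, -1, 0, 0, 0],
   ![0, 0, 0, 1, 0, 0]],
  ![![0, 0, 0, 0, 0, 0],
   ![0, 0, 0, 0, 0, 0],
   ![0, 0, 0, 0, 0, -1],
   ![0, 0, 0, 0, -1, 0],
   ![0, 0, 0, 1, 0, 0],
   ![0, 0, 1, 0, 0, 0]],
  ![![0, 0, 0, 0, -1, 0],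
   ![0, 0, 0, 0, 0, 1],
   ![0, 0, 0, 0, 0, 0],
   ![0, 0, 0, 0, 0, 0],
   ![1, 0, 0, 0, 0, 0],
   ![0, -1, 0, 0, 0, 0]],
  ![![0, 0, 0, 0, 0, 1],
   ![0, 0, 0, 0, 1, 0],
   ![0, 0, 0, 0, 0, 0],
   ![0, 0, 0, 0, 0, 0],
   ![0, -1, 0, 0, 0, 0],
   ![-1, 0, 0, 0, 0, 0]],
  ![![0, 0, 1, 0, 0, 0],
   ![0, 0, 0, -1, 0, 0],
   ![-1, 0, 0, 0, 0, 0],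
   ![0, 1, 0, 0, 0, 0],
   ![0, 0, 0, 0, 0, 0],
   ![0, 0, 0, 0, 0, 0]],
  ![![0, 0, 0, -1, 0, 0],
   ![0, 0, -1, 0, 0, 0],
   ![0, 1, 0, 0, 0, 0],
   ![1, 0, 0, 0, 0, 0],
   ![0, 0, 0, 0, 0, 0],
   ![0, 0, 0, 0, 0, 0]]] i j k

set_option maxHeartbeats 2000000 in
lemma epsZ_eq_epsT : ∀ i j k : Fin 6, epsZ i j k = epsT i j k := by decide

lemma kap_cast (i j : Fin 6) : kap i j = (kapZ i j : ℝ) := by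
  simp only [kap, kapZ]; split_ifs <;> norm_num

lemma epsBase_cast (i j k : Fin 6) : epsBase i j k = ((epsBaseZ i j k : ℤ) : ℝ) := by
  simp only [epsBase, epsBaseZ]; split_ifs <;> norm_num

lemma eps_cast (i j k : Fin 6) : eps i j k = ((epsT i j k : ℤ) : ℝ) := by
  rw [← epsZ_eq_epsT]
  simp only [eps, antisym3, epsZ, epsBase_cast, Int.cast_sum, Int.cast_mul]

-- integer identities, by decide
lemma id_kk : (∑ j : Fin 6, ∑ k : Fin 6, kapZ j k * kapZ j k) = 6 := by decide
lemma id_ek : ∀ i : Fin 6, (∑ j : Fin 6, ∑ k : Fin 6, epsT i j k * kapZ j k) = 0 := by decide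
lemma id_ke : ∀ p : Fin 6, (∑ j : Fin 6, ∑ k : Fin 6, kapZ j k * epsT j k p) = 0 := by decide
lemma id_ee : ∀ i p : Fin 6,
    (∑ j : Fin 6, ∑ k : Fin 6, epsT i j k * epsT j k p) = if i = p then 4 else 0 := by decide
lemma id_kap_anti : ∀ i j : Fin 6, kapZ j i = -kapZ i j := by decide
lemma id_eps_anti : ∀ i j p : Fin 6, epsT j i p = -epsT i j p := by decide

-- real versions
lemma R_kk : (∑ j : Fin 6, ∑ k : Fin 6, kap j k * kap j k) = 6 := by
  simp only [kap_cast]; exact_mod_cast id_kk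
lemma R_ek (i : Fin 6) : (∑ j : Fin 6, ∑ k : Fin 6, eps i j k * kap j k) = 0 := by
  simp only [kap_cast, eps_cast]; exact_mod_cast id_ek i
lemma R_ke (p : Fin 6) : (∑ j : Fin 6, ∑ k : Fin 6, kap j k * eps j k p) = 0 := by
  simp only [kap_cast, eps_cast]; exact_mod_cast id_ke p
lemma R_ee (i p : Fin 6) :
    (∑ j : Fin 6, ∑ k : Fin 6, eps i j k * eps j k p) = if i = p then 4 else 0 := by
  simp only [eps_cast]
  rw [show ((if i = p then (4:ℝ) else 0)) = (((if i = p then (4:ℤ) else 0) : ℤ) : ℝ) by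
    split_ifs <;> norm_num]
  exact_mod_cast id_ee i p
lemma kap_anti (i j : Fin 6) : kap j i = -kap i j := by
  simp only [kap_cast]; exact_mod_cast id_kap_anti i j
lemma eps_anti (i j p : Fin 6) : eps j i p = -eps i j p := by
  simp only [eps_cast]; exact_mod_cast id_eps_anti i j p

-- sum machinery
lemma triple_swap (f : Fin 6 → Fin 6 → Fin 6 → ℝ) :
    (∑ j : Fin 6, ∑ k : Fin 6, ∑ p : Fin 6, f j k p)
      = ∑ p : Fin 6, ∑ j : Fin 6, ∑ k : Fin 6, f j k p := by
  calc (∑ j : Fin 6, ∑ k : Fin 6, ∑ p : Fin 6, f j k p)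
      = ∑ j : Fin 6, ∑ p : Fin 6, ∑ k : Fin 6, f j k p :=
        Finset.sum_congr rfl fun j _ => Finset.sum_comm ..
    _ = ∑ p : Fin 6, ∑ j : Fin 6, ∑ k : Fin 6, f j k p := Finset.sum_comm ..

lemma contract_add (w : Fin 6 → Fin 6 → ℝ) (A B : Matrix (Fin 6) (Fin 6) ℝ) :
    (∑ j : Fin 6, ∑ k : Fin 6, w j k * (A + B) j k)
      = (∑ j : Fin 6, ∑ k : Fin 6, w j k * A j k)
        + ∑ j : Fin 6, ∑ k : Fin 6, w j k * B j k := by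
  simp [Matrix.add_apply, mul_add, Finset.sum_add_distrib]

lemma kap_contract_b1 (a : ℝ) :
    (∑ j : Fin 6, ∑ k : Fin 6, kap j k * bracket1 a j k) = 6 * a := by
  simp only [bracket1]
  have : ∀ j k : Fin 6, kap j k * (a * kap j k) = a * (kap j k * kap j k) := fun _ _ => by ring
  simp only [this, ← Finset.mul_sum, R_kk]; ring

lemma eps_contract_b1 (i : Fin 6) (a : ℝ) :
    (∑ j : Fin 6, ∑ k : Fin 6, eps i j k * bracket1 a j k) = 0 := by
  simp only [bracket1]
  have : ∀ j k : Fin 6, eps i j k * (a * kap j k) = a * (eps i j k * kap j k) :=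
    fun _ _ => by ring
  simp only [this, ← Finset.mul_sum, R_ek i, mul_zero]

lemma kap_contract_b2 (v : Fin 6 → ℝ) :
    (∑ j : Fin 6, ∑ k : Fin 6, kap j k * bracket2 v j k) = 0 := by
  simp only [bracket2, Finset.mul_sum]
  rw [triple_swap (fun j k p => kap j k * (eps j k p * v p))]
  refine Finset.sum_eq_zero fun p _ => ?_
  simp only [← mul_assoc, ← Finset.sum_mul, R_ke p, zero_mul]

lemma eps_contract_b2 (i : Fin 6) (v : Fin 6 → ℝ) :
    (∑ j : Fin 6, ∑ k : Fin 6, eps i j k * bracket2 v j k) = 4 * v i := by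
  simp only [bracket2, Finset.mul_sum]
  rw [triple_swap (fun j k p => eps i j k * (eps j k p * v p))]
  have : ∀ p : Fin 6, (∑ j : Fin 6, ∑ k : Fin 6, eps i j k * (eps j k p * v p))
      = (if i = p then (4:ℝ) else 0) * v p := by
    intro p
    simp only [← mul_assoc, ← Finset.sum_mul, R_ee i p]
  simp only [this, ite_mul, zero_mul, Finset.sum_ite_eq, Finset.mem_univ, if_true]

/-- The coefficients are determined by contraction. -/
lemma decomp_coeffs (θ : Matrix (Fin 6) (Fin 6) ℝ) (a : ℝ) (v : Fin 6 → ℝ)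
    (S : Matrix (Fin 6) (Fin 6) ℝ) (hθ : memSU3 θ)
    (hEq : S = θ + bracket1 a + bracket2 v) :
    (∑ j : Fin 6, ∑ k : Fin 6, kap j k * S j k) = 6 * a ∧
    ∀ i : Fin 6, (∑ j : Fin 6, ∑ k : Fin 6, eps i j k * S j k) = 4 * v i := by
  subst hEq
  constructor
  · rw [contract_add, contract_add, hθ.2.2, kap_contract_b1, kap_contract_b2]; ring
  · intro i
    rw [contract_add, contract_add, hθ.2.1 i, eps_contract_b1, eps_contract_b2]; ring

/-- `so(6) = su(3) ⊕ [ℝ]₁ ⊕ [ℝ⁶]₂`: every skew-symmetric 6×6 real matrix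
decomposes uniquely as `θ + [a]₁ + [v]₂` with `θ ∈ su(3)`. -/
theorem so6_decomposition (S : Matrix (Fin 6) (Fin 6) ℝ) (hS : Sᵀ = -S) :
    ∃! x : Matrix (Fin 6) (Fin 6) ℝ × ℝ × (Fin 6 → ℝ),
      memSU3 x.1 ∧ S = x.1 + bracket1 x.2.1 + bracket2 x.2.2 := by
  set a₀ : ℝ := (∑ j : Fin 6, ∑ k : Fin 6, kap j k * S j k) / 6 with ha₀
  set v₀ : Fin 6 → ℝ := fun i => (∑ j : Fin 6, ∑ k : Fin 6, eps i j k * S j k) / 4 with hv₀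
  set θ₀ : Matrix (Fin 6) (Fin 6) ℝ := S - bracket1 a₀ - bracket2 v₀ with hθ₀
  have hSeq : S = θ₀ + bracket1 a₀ + bracket2 v₀ := by
    rw [hθ₀]; abel
  have hmem : memSU3 θ₀ := by
    refine ⟨?_, ?_, ?_⟩
    · funext i j
      have hSij : S j i = -S i j := by
        have := congrFun (congrFun hS i) j
        simpa [Matrix.transpose_apply, Matrix.neg_apply] using this
      simp only [hθ₀, Matrix.transpose_apply, Matrix.neg_apply, Matrix.sub_apply,
        bracket1, bracket2, hSij, kap_anti i j]
      have : (∑ p : Fin 6, eps j i p * v₀ p) = -∑ p : Fin 6, eps i j p * v₀ p := by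
        rw [← Finset.sum_neg_distrib]
        exact Finset.sum_congr rfl fun p _ => by rw [eps_anti i j p]; ring
      rw [this]; ring
    · intro i
      have h1 : (∑ j : Fin 6, ∑ k : Fin 6, eps i j k * S j k)
          = (∑ j : Fin 6, ∑ k : Fin 6, eps i j k * θ₀ j k)
            + (∑ j : Fin 6, ∑ k : Fin 6, eps i j k * bracket1 a₀ j k)
            + ∑ j : Fin 6, ∑ k : Fin 6, eps i j k * bracket2 v₀ j k := by
        conv_lhs => rw [hSeq]
        rw [contract_add, contract_add]
      rw [eps_contract_b1, eps_contract_b2] at h1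
      have : 4 * v₀ i = ∑ j : Fin 6, ∑ k : Fin 6, eps i j k * S j k := by
        rw [hv₀]; ring
      linarith [h1, this]
    · have h1 : (∑ j : Fin 6, ∑ k : Fin 6, kap j k * S j k)
          = (∑ j : Fin 6, ∑ k : Fin 6, kap j k * θ₀ j k)
            + (∑ j : Fin 6, ∑ k : Fin 6, kap j k * bracket1 a₀ j k)
            + ∑ j : Fin 6, ∑ k : Fin 6, kap j k * bracket2 v₀ j k := by
        conv_lhs => rw [hSeq]
        rw [contract_add, contract_add]
      rw [kap_contract_b1, kap_contract_b2] at h1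
      have : 6 * a₀ = ∑ j : Fin 6, ∑ k : Fin 6, kap j k * S j k := by
        rw [ha₀]; ring
      linarith [h1, this]
  refine ⟨(θ₀, a₀, v₀), ⟨hmem, hSeq⟩, ?_⟩
  rintro ⟨θ, a, v⟩ ⟨hθ, hEq⟩
  obtain ⟨hka, hev⟩ := decomp_coeffs θ a v S hθ hEq
  have haa : a = a₀ := by rw [ha₀, hka]; ring
  have hvv : v = v₀ := by
    funext i
    have := hev i
    rw [hv₀]; dsimp only; rw [this]; ring
  have hθθ : θ = θ₀ := by
    rw [hθ₀, ← haa, ← hvv, hEq]; abel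
  simp [haa, hvv, hθθ]

end
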